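/- arXiv:1202.4992 — 2 statements merged into one kernel-verified Lean document; each statement's English description precedes it below -/
import Mathlib

section
/- For every ℓ ≥ 1, the dimension over ℂ of the quotient ring ℂ[X,Y,w]/(X⁸, X²Y, Y², X⁵·w^{ℓ−1}, Y·w^{ℓ−1}, w^ℓ) is 10ℓ − 5. -/
/-!
The ideal is generated by monomials, so the classes of the monomials outside it (the standard
monomials, i.e. the complement of the upper closure of the generators' exponents) form a basis of
the quotient. A standard monomial `X^a Y^b w^c` has `b ≤ 1` and `c < ℓ`; for `b = 0` it is any
`a < 8` except the corner `a ≥ 5, c = ℓ - 1`, and for `b = 1` it has `a < 2, c < ℓ - 1`.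
This gives `5ℓ + 3(ℓ - 1) + 2(ℓ - 1) = 10ℓ - 5` of them.
-/

open MvPolynomial Finsupp Finset

namespace MvPolynomial

variable {R σ : Type*} [CommRing R]

theorem span_monomial_image_eq_restrictSupportIdeal (s : Set (σ →₀ ℕ)) :
    Ideal.span ((monomial · (1 : R)) '' s) =
      restrictSupportIdeal R (upperClosure s : Set (σ →₀ ℕ)) (upperClosure s).upper := by
  ext p
  rw [mem_ideal_span_monomial_image]
  exact forall₂_congr fun _ _ => mem_upperClosure.symm

theorem isCompl_restrictSupport_compl (t : Set (σ →₀ ℕ)) :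
    IsCompl (restrictSupport R t) (restrictSupport R tᶜ) := by
  constructor
  · refine Submodule.disjoint_def.2 fun p ht htc => support_eq_empty.1 <| Finset.coe_eq_empty.1 <|
      Set.subset_empty_iff.1 ?_
    exact (Set.subset_inter ht htc).trans (Set.inter_compl_self t).subset
  · rw [codisjoint_iff, restrictSupport_eq_span, restrictSupport_eq_span, ← Submodule.span_union,
      ← Set.image_union, Set.union_compl_self, ← restrictSupport_eq_span, restrictSupport_univ]

theorem finrank_quotient_span_monomial_image [StrongRankCondition R] (s : Set (σ →₀ ℕ)) :
    Module.finrank R (MvPolynomial σ R ⧸ Ideal.span ((monomial · (1 : R)) '' s)) =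
      Nat.card ((upperClosure s : Set (σ →₀ ℕ))ᶜ : Set (σ →₀ ℕ)) := by
  rw [span_monomial_image_eq_restrictSupportIdeal,
    ← (Submodule.Quotient.restrictScalarsEquiv R _).finrank_eq,
    restrictScalars_restrictSupportIdeal,
    ((restrictSupport R _).quotientEquivOfIsCompl _ (isCompl_restrictSupport_compl _)).finrank_eq]
  exact Module.finrank_eq_nat_card_basis (basisRestrictSupport R _)

end MvPolynomial

noncomputable def Finsupp.finThreeEquiv : (Fin 3 →₀ ℕ) ≃ ℕ × ℕ × ℕ :=
  equivFunOnFinite.trans ((Fin.consEquiv fun _ => ℕ).symm.trans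
    (Equiv.prodCongr (Equiv.refl ℕ) (piFinTwoEquiv fun _ => ℕ)))

@[simp]
theorem Finsupp.finThreeEquiv_apply (d : Fin 3 →₀ ℕ) : finThreeEquiv d = (d 0, d 1, d 2) := rfl

namespace AugmentedSeries

def exponents (ℓ : ℕ) : Set (Fin 3 →₀ ℕ) :=
  {single 0 8, single 0 2 + single 1 1, single 1 2, single 0 5 + single 2 (ℓ - 1),
    single 1 1 + single 2 (ℓ - 1), single 2 ℓ}

theorem generators_eq_monomial_image {R : Type*} [CommSemiring R] (ℓ : ℕ) :
    ({X 0 ^ 8, X 0 ^ 2 * X 1, X 1 ^ 2, X 0 ^ 5 * X 2 ^ (ℓ - 1), X 1 * X 2 ^ (ℓ - 1), X 2 ^ ℓ} :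
      Set (MvPolynomial (Fin 3) R)) = (monomial · 1) '' exponents ℓ := by
  simp only [X_pow_eq_monomial]
  simp only [exponents, Set.image_insert_eq, Set.image_singleton, X, monomial_mul, mul_one]

def standardTriples (ℓ : ℕ) : Finset (ℕ × ℕ × ℕ) :=
  range 5 ×ˢ {0} ×ˢ range ℓ ∪ Ico 5 8 ×ˢ {0} ×ˢ range (ℓ - 1) ∪ range 2 ×ˢ {1} ×ˢ range (ℓ - 1)

theorem card_standardTriples (ℓ : ℕ) : (standardTriples ℓ).card = 10 * ℓ - 5 := by
  rw [standardTriples, card_union_of_disjoint, card_union_of_disjoint]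
  · simp only [card_product, card_range, card_singleton, Nat.card_Ico]
    omega
  all_goals
    refine disjoint_left.2 fun ⟨a, b, c⟩ => ?_
    simp only [mem_union, mem_product, mem_range, mem_Ico, mem_singleton]
    omega

theorem mem_compl_upperClosure_exponents_iff (ℓ : ℕ) (d : Fin 3 →₀ ℕ) :
    d ∈ (upperClosure (exponents ℓ) : Set (Fin 3 →₀ ℕ))ᶜ ↔
      Finsupp.finThreeEquiv d ∈ standardTriples ℓ := by
  simp [exponents, standardTriples, mem_upperClosure, Finsupp.le_def, Fin.forall_fin_succ]
  omega

theorem card_compl_upperClosure_exponents (ℓ : ℕ) :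
    Nat.card ((upperClosure (exponents ℓ) : Set (Fin 3 →₀ ℕ))ᶜ : Set (Fin 3 →₀ ℕ)) =
      10 * ℓ - 5 := by
  rw [Nat.card_congr (Finsupp.finThreeEquiv.subtypeEquiv (mem_compl_upperClosure_exponents_iff ℓ)),
    Nat.card_eq_fintype_card, Fintype.card_coe, card_standardTriples]

end AugmentedSeries

open AugmentedSeries in
theorem stmt10_general (ℓ : ℕ) :
    Module.finrank ℂ (MvPolynomial (Fin 3) ℂ ⧸
      Ideal.span ({X 0 ^ 8, X 0 ^ 2 * X 1, X 1 ^ 2,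
        X 0 ^ 5 * X 2 ^ (ℓ - 1), X 1 * X 2 ^ (ℓ - 1), X 2 ^ ℓ} :
        Set (MvPolynomial (Fin 3) ℂ))) = 10 * ℓ - 5 := by
  rw [generators_eq_monomial_image, finrank_quotient_span_monomial_image,
    card_compl_upperClosure_exponents]

theorem stmt10 (ℓ : ℕ) (hℓ : 1 ≤ ℓ) :
    Module.finrank ℂ (MvPolynomial (Fin 3) ℂ ⧸
      Ideal.span ({X 0 ^ 8, X 0 ^ 2 * X 1, X 1 ^ 2,
        X 0 ^ 5 * X 2 ^ (ℓ - 1), X 1 * X 2 ^ (ℓ - 1), X 2 ^ ℓ} :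
        Set (MvPolynomial (Fin 3) ℂ))) = 10 * ℓ - 5 :=
  stmt10_general ℓ
end

section
/- For every ℓ ≥ 1, (10ℓ − 5) + (11ℓ − 11) + (9ℓ − 2) = 30ℓ − 18, and moreover the dimension over ℂ of the direct sum ℂ[X,Y,w]/(X⁸, X²Y, Y², X⁵w^{ℓ−1}, Yw^{ℓ−1}, w^ℓ) ⊕ ℂ[X,Y,w]/(X⁹, X²Y, Y², w^{ℓ−1}) ⊕ ℂ[X,w]/(X⁹, X⁷w^{ℓ−1}, w^ℓ) equals 30ℓ − 18. -/
open MvPolynomial Finsupp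

noncomputable section AuxStmt13

/-- coefficient-extraction linear map indexed by `ι`. -/
def phiMap {σ : Type*} (ι : Type*) (e : ι → (σ →₀ ℕ)) :
    MvPolynomial σ ℂ →ₗ[ℂ] (ι → ℂ) :=
  LinearMap.pi fun i => lcoeff ℂ (e i)

theorem quot_equiv {σ ι : Type*} [Fintype ι] [DecidableEq ι]
    (G : Set (σ →₀ ℕ)) (e : ι → (σ →₀ ℕ)) (he : Function.Injective e)
    (hrange : ∀ d, (∀ g ∈ G, ¬ g ≤ d) ↔ d ∈ Set.range e) :
    Nonempty ((MvPolynomial σ ℂ ⧸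
      Ideal.span ((fun s => monomial s (1 : ℂ)) '' G)) ≃ₗ[ℂ] (ι → ℂ)) := by
  set I := Ideal.span ((fun s => monomial s (1 : ℂ)) '' G) with hI
  have hker : LinearMap.ker (phiMap ι e) = I.restrictScalars ℂ := by
    ext p
    simp only [LinearMap.mem_ker, Submodule.restrictScalars_mem, hI,
      mem_ideal_span_monomial_image, funext_iff, phiMap, LinearMap.pi_apply,
      lcoeff_apply, Pi.zero_apply]
    constructor
    · intro h d hd
      by_contra hc
      push_neg at hc
      obtain ⟨i, rfl⟩ := (hrange d).mp hc
      exact (MvPolynomial.mem_support_iff.mp hd) (h i)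
    · intro h i
      by_contra hc
      obtain ⟨g, hg, hle⟩ := h _ (MvPolynomial.mem_support_iff.mpr hc)
      exact ((hrange (e i)).mpr ⟨i, rfl⟩) g hg hle
  have hsurj : Function.Surjective (phiMap ι e) := by
    intro f
    refine ⟨∑ i, monomial (e i) (f i), ?_⟩
    funext j
    show coeff (e j) _ = f j
    rw [MvPolynomial.coeff_sum]
    classical
    simp [MvPolynomial.coeff_monomial, he.eq_iff]
  exact ⟨(Submodule.Quotient.restrictScalarsEquiv ℂ I).symm.trans
    ((Submodule.quotEquivOfEq _ _ hker.symm).trans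
      ((phiMap ι e).quotKerEquivOfSurjective hsurj))⟩

lemma le3 {g d : Fin 3 →₀ ℕ} : g ≤ d ↔ g 0 ≤ d 0 ∧ g 1 ≤ d 1 ∧ g 2 ≤ d 2 := by
  rw [Finsupp.le_def]
  refine ⟨fun h => ⟨h 0, h 1, h 2⟩, ?_⟩
  rintro ⟨h0, h1, h2⟩ s
  fin_cases s <;> assumption

lemma le2 {g d : Fin 2 →₀ ℕ} : g ≤ d ↔ g 0 ≤ d 0 ∧ g 1 ≤ d 1 := by
  rw [Finsupp.le_def]
  refine ⟨fun h => ⟨h 0, h 1⟩, ?_⟩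
  rintro ⟨h0, h1⟩ s
  fin_cases s <;> assumption

def eA (ℓ : ℕ) : (Fin 8 × Fin (ℓ-1)) ⊕ (Fin 5 ⊕ (Fin 2 × Fin (ℓ-1))) → (Fin 3 →₀ ℕ)
  | .inl (a, c) => Finsupp.single 0 (a:ℕ) + Finsupp.single 2 (c:ℕ)
  | .inr (.inl a) => Finsupp.single 0 (a:ℕ) + Finsupp.single 2 (ℓ-1)
  | .inr (.inr (a, c)) => Finsupp.single 0 (a:ℕ) + Finsupp.single 1 1 + Finsupp.single 2 (c:ℕ)

theorem caseA (ℓ : ℕ) (hℓ : 1 ≤ ℓ) :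
    Nonempty ((MvPolynomial (Fin 3) ℂ ⧸
        Ideal.span ({X 0 ^ 8, X 0 ^ 2 * X 1, X 1 ^ 2,
          X 0 ^ 5 * X 2 ^ (ℓ - 1), X 1 * X 2 ^ (ℓ - 1), X 2 ^ ℓ} :
          Set (MvPolynomial (Fin 3) ℂ))) ≃ₗ[ℂ]
      ((Fin 8 × Fin (ℓ-1)) ⊕ (Fin 5 ⊕ (Fin 2 × Fin (ℓ-1))) → ℂ)) := by
  have hset : ({X 0 ^ 8, X 0 ^ 2 * X 1, X 1 ^ 2,
      X 0 ^ 5 * X 2 ^ (ℓ - 1), X 1 * X 2 ^ (ℓ - 1), X 2 ^ ℓ} :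
      Set (MvPolynomial (Fin 3) ℂ)) =
      (fun s => monomial s (1:ℂ)) ''
        {Finsupp.single 0 8, Finsupp.single 0 2 + Finsupp.single 1 1,
         Finsupp.single 1 2, Finsupp.single 0 5 + Finsupp.single 2 (ℓ-1),
         Finsupp.single 1 1 + Finsupp.single 2 (ℓ-1), Finsupp.single 2 ℓ} := by
    simp only [Set.image_insert_eq, Set.image_singleton, monomial_add_single,
      ← X_pow_eq_monomial, pow_one]
  rw [hset]
  have heA : Function.Injective (eA ℓ) := by
    intro i j h
    have h0 := DFunLike.congr_fun h 0
    have h1 := DFunLike.congr_fun h 1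
    have h2 := DFunLike.congr_fun h 2
    rcases i with ⟨⟨a,ha⟩,⟨c,hc⟩⟩ | ⟨a,ha⟩ | ⟨⟨a,ha⟩,⟨c,hc⟩⟩ <;>
      rcases j with ⟨⟨a',ha'⟩,⟨c',hc'⟩⟩ | ⟨a',ha'⟩ | ⟨⟨a',ha'⟩,⟨c',hc'⟩⟩ <;>
      simp [eA, Finsupp.single_apply] at h0 h1 h2 ⊢ <;> omega
  refine quot_equiv _ (eA ℓ) heA ?_
  intro d
  constructor
  · intro h
    simp only [Set.mem_insert_iff, Set.mem_singleton_iff, forall_eq_or_imp, forall_eq,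
      le3, Finsupp.coe_add, Pi.add_apply, Finsupp.single_apply] at h
    simp only [show ((0:Fin 3) = 0) = True from by simp, show ((0:Fin 3) = 1) = False from by simp,
       show ((0:Fin 3) = 2) = False from by simp, show ((1:Fin 3) = 0) = False from by simp,
       show ((1:Fin 3) = 1) = True from by simp, show ((1:Fin 3) = 2) = False from by simp,
       show ((2:Fin 3) = 0) = False from by simp, show ((2:Fin 3) = 1) = False from by simp,
       show ((2:Fin 3) = 2) = True from by simp, if_true, if_false] at h
    obtain ⟨h1, h2, h3, h4, h5, h6⟩ := h
    by_cases hb : d 1 = 0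
    · by_cases hcc : (d 2 : ℕ) < ℓ - 1
      · exact ⟨.inl (⟨d 0, by omega⟩, ⟨d 2, hcc⟩),
          by ext s; fin_cases s <;> simp [eA, Finsupp.single_apply] <;> omega⟩
      · exact ⟨.inr (.inl ⟨d 0, by omega⟩),
          by ext s; fin_cases s <;> simp [eA, Finsupp.single_apply] <;> omega⟩
    · exact ⟨.inr (.inr (⟨d 0, by omega⟩, ⟨d 2, by omega⟩)),
        by ext s; fin_cases s <;> simp [eA, Finsupp.single_apply] <;> omega⟩
  · rintro ⟨i, rfl⟩ g hg
    simp only [Set.mem_insert_iff, Set.mem_singleton_iff] at hg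
    rcases i with ⟨⟨a,ha⟩,⟨c,hc⟩⟩ | ⟨a,ha⟩ | ⟨⟨a,ha⟩,⟨c,hc⟩⟩ <;>
      rcases hg with rfl|rfl|rfl|rfl|rfl|rfl <;>
      simp [le3, eA, Finsupp.single_apply] <;> omega

def eB (ℓ : ℕ) : (Fin 9 × Fin (ℓ-1)) ⊕ (Fin 2 × Fin (ℓ-1)) → (Fin 3 →₀ ℕ)
  | .inl (a, c) => Finsupp.single 0 (a:ℕ) + Finsupp.single 2 (c:ℕ)
  | .inr (a, c) => Finsupp.single 0 (a:ℕ) + Finsupp.single 1 1 + Finsupp.single 2 (c:ℕ)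

theorem caseB (ℓ : ℕ) (hℓ : 1 ≤ ℓ) :
    Nonempty ((MvPolynomial (Fin 3) ℂ ⧸
        Ideal.span ({X 0 ^ 9, X 0 ^ 2 * X 1, X 1 ^ 2, X 2 ^ (ℓ - 1)} :
          Set (MvPolynomial (Fin 3) ℂ))) ≃ₗ[ℂ]
      ((Fin 9 × Fin (ℓ-1)) ⊕ (Fin 2 × Fin (ℓ-1)) → ℂ)) := by
  have hset : ({X 0 ^ 9, X 0 ^ 2 * X 1, X 1 ^ 2, X 2 ^ (ℓ - 1)} :
      Set (MvPolynomial (Fin 3) ℂ)) =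
      (fun s => monomial s (1:ℂ)) ''
        {Finsupp.single 0 9, Finsupp.single 0 2 + Finsupp.single 1 1,
         Finsupp.single 1 2, Finsupp.single 2 (ℓ-1)} := by
    simp only [Set.image_insert_eq, Set.image_singleton, monomial_add_single,
      ← X_pow_eq_monomial, pow_one]
  rw [hset]
  have heB : Function.Injective (eB ℓ) := by
    intro i j h
    have h0 := DFunLike.congr_fun h 0
    have h1 := DFunLike.congr_fun h 1
    have h2 := DFunLike.congr_fun h 2
    rcases i with ⟨⟨a,ha⟩,⟨c,hc⟩⟩ | ⟨⟨a,ha⟩,⟨c,hc⟩⟩ <;>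
      rcases j with ⟨⟨a',ha'⟩,⟨c',hc'⟩⟩ | ⟨⟨a',ha'⟩,⟨c',hc'⟩⟩ <;>
      simp [eB, Finsupp.single_apply] at h0 h1 h2 ⊢ <;> omega
  refine quot_equiv _ (eB ℓ) heB ?_
  intro d
  constructor
  · intro h
    simp only [Set.mem_insert_iff, Set.mem_singleton_iff, forall_eq_or_imp, forall_eq,
      le3, Finsupp.coe_add, Pi.add_apply, Finsupp.single_apply] at h
    simp only [show ((0:Fin 3) = 0) = True from by simp, show ((0:Fin 3) = 1) = False from by simp,
       show ((0:Fin 3) = 2) = False from by simp, show ((1:Fin 3) = 0) = False from by simp,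
       show ((1:Fin 3) = 1) = True from by simp, show ((1:Fin 3) = 2) = False from by simp,
       show ((2:Fin 3) = 0) = False from by simp, show ((2:Fin 3) = 1) = False from by simp,
       show ((2:Fin 3) = 2) = True from by simp, if_true, if_false] at h
    obtain ⟨h1, h2, h3, h4⟩ := h
    by_cases hb : d 1 = 0
    · exact ⟨.inl (⟨d 0, by omega⟩, ⟨d 2, by omega⟩),
        by ext s; fin_cases s <;> simp [eB, Finsupp.single_apply] <;> omega⟩
    · exact ⟨.inr (⟨d 0, by omega⟩, ⟨d 2, by omega⟩),
        by ext s; fin_cases s <;> simp [eB, Finsupp.single_apply] <;> omega⟩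
  · rintro ⟨i, rfl⟩ g hg
    simp only [Set.mem_insert_iff, Set.mem_singleton_iff] at hg
    rcases i with ⟨⟨a,ha⟩,⟨c,hc⟩⟩ | ⟨⟨a,ha⟩,⟨c,hc⟩⟩ <;>
      rcases hg with rfl|rfl|rfl|rfl <;>
      simp [le3, eB, Finsupp.single_apply] <;> omega

def eC (ℓ : ℕ) : (Fin 9 × Fin (ℓ-1)) ⊕ Fin 7 → (Fin 2 →₀ ℕ)
  | .inl (a, c) => Finsupp.single 0 (a:ℕ) + Finsupp.single 1 (c:ℕ)
  | .inr a => Finsupp.single 0 (a:ℕ) + Finsupp.single 1 (ℓ-1)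

theorem caseC (ℓ : ℕ) (hℓ : 1 ≤ ℓ) :
    Nonempty ((MvPolynomial (Fin 2) ℂ ⧸
        Ideal.span ({X 0 ^ 9, X 0 ^ 7 * X 1 ^ (ℓ - 1), X 1 ^ ℓ} :
          Set (MvPolynomial (Fin 2) ℂ))) ≃ₗ[ℂ]
      ((Fin 9 × Fin (ℓ-1)) ⊕ Fin 7 → ℂ)) := by
  have hset : ({X 0 ^ 9, X 0 ^ 7 * X 1 ^ (ℓ - 1), X 1 ^ ℓ} :
      Set (MvPolynomial (Fin 2) ℂ)) =
      (fun s => monomial s (1:ℂ)) ''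
        {Finsupp.single 0 9, Finsupp.single 0 7 + Finsupp.single 1 (ℓ-1),
         Finsupp.single 1 ℓ} := by
    simp only [Set.image_insert_eq, Set.image_singleton, monomial_add_single,
      ← X_pow_eq_monomial, pow_one]
  rw [hset]
  have heC : Function.Injective (eC ℓ) := by
    intro i j h
    have h0 := DFunLike.congr_fun h 0
    have h1 := DFunLike.congr_fun h 1
    rcases i with ⟨⟨a,ha⟩,⟨c,hc⟩⟩ | ⟨a,ha⟩ <;>
      rcases j with ⟨⟨a',ha'⟩,⟨c',hc'⟩⟩ | ⟨a',ha'⟩ <;>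
      simp [eC, Finsupp.single_apply] at h0 h1 ⊢ <;> omega
  refine quot_equiv _ (eC ℓ) heC ?_
  intro d
  constructor
  · intro h
    simp only [Set.mem_insert_iff, Set.mem_singleton_iff, forall_eq_or_imp, forall_eq,
      le2, Finsupp.coe_add, Pi.add_apply, Finsupp.single_apply] at h
    simp only [show ((0:Fin 2) = 0) = True from by simp, show ((0:Fin 2) = 1) = False from by simp,
       show ((1:Fin 2) = 0) = False from by simp, show ((1:Fin 2) = 1) = True from by simp,
       if_true, if_false] at h
    obtain ⟨h1, h2, h3⟩ := h
    by_cases hcc : (d 1 : ℕ) < ℓ - 1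
    · exact ⟨.inl (⟨d 0, by omega⟩, ⟨d 1, hcc⟩),
        by ext s; fin_cases s <;> simp [eC, Finsupp.single_apply] <;> omega⟩
    · exact ⟨.inr ⟨d 0, by omega⟩,
        by ext s; fin_cases s <;> simp [eC, Finsupp.single_apply] <;> omega⟩
  · rintro ⟨i, rfl⟩ g hg
    simp only [Set.mem_insert_iff, Set.mem_singleton_iff] at hg
    rcases i with ⟨⟨a,ha⟩,⟨c,hc⟩⟩ | ⟨a,ha⟩ <;>
      rcases hg with rfl|rfl|rfl <;>
      simp [le2, eC, Finsupp.single_apply] <;> omega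

end AuxStmt13

set_option synthInstance.maxHeartbeats 1000000

theorem stmt13 (ℓ : ℕ) (hℓ : 1 ≤ ℓ) :
    (10 * ℓ - 5) + (11 * ℓ - 11) + (9 * ℓ - 2) = 30 * ℓ - 18 ∧
    Module.finrank ℂ
      ((MvPolynomial (Fin 3) ℂ ⧸
          Ideal.span ({X 0 ^ 8, X 0 ^ 2 * X 1, X 1 ^ 2,
            X 0 ^ 5 * X 2 ^ (ℓ - 1), X 1 * X 2 ^ (ℓ - 1), X 2 ^ ℓ} :
            Set (MvPolynomial (Fin 3) ℂ))) ×
        (MvPolynomial (Fin 3) ℂ ⧸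
          Ideal.span ({X 0 ^ 9, X 0 ^ 2 * X 1, X 1 ^ 2, X 2 ^ (ℓ - 1)} :
            Set (MvPolynomial (Fin 3) ℂ))) ×
        (MvPolynomial (Fin 2) ℂ ⧸
          Ideal.span ({X 0 ^ 9, X 0 ^ 7 * X 1 ^ (ℓ - 1), X 1 ^ ℓ} :
            Set (MvPolynomial (Fin 2) ℂ)))) = 30 * ℓ - 18 := by
  obtain ⟨fA⟩ := caseA ℓ hℓ
  obtain ⟨fB⟩ := caseB ℓ hℓ
  obtain ⟨fC⟩ := caseC ℓ hℓ
  refine ⟨by omega, ?_⟩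
  haveI := Module.Finite.equiv fA.symm
  haveI := Module.Finite.equiv fB.symm
  haveI := Module.Finite.equiv fC.symm
  rw [Module.finrank_prod, Module.finrank_prod, fA.finrank_eq, fB.finrank_eq, fC.finrank_eq,
    Module.finrank_pi, Module.finrank_pi, Module.finrank_pi]
  simp only [Fintype.card_sum, Fintype.card_prod, Fintype.card_fin]
  omega
end
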